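/- For every real symmetric traceless 3×3 matrix S, one has |tr(S³)| ≤ (1/√6) · (tr(S²))^{3/2}. -/

import Mathlib

open Matrix

lemma trace_pow_eq (S : Matrix (Fin 3) (Fin 3) ℝ) (hH : S.IsHermitian) (k : ℕ) :
    (S ^ k).trace = ∑ i, hH.eigenvalues i ^ k := by
  conv_lhs => rw [hH.spectral_theorem, Unitary.conjStarAlgAut_apply]
  set U := (hH.eigenvectorUnitary : Matrix (Fin 3) (Fin 3) ℝ)
  have hUU : star U * U = 1 := Unitary.coe_star_mul_self hH.eigenvectorUnitary
  have hpow : (U * diagonal (RCLike.ofReal ∘ hH.eigenvalues) * star U) ^ k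
      = U * (diagonal (RCLike.ofReal ∘ hH.eigenvalues)) ^ k * star U := by
    induction k with
    | zero =>
      simp only [pow_zero, Matrix.mul_one]
      exact (Unitary.coe_mul_star_self hH.eigenvectorUnitary).symm
    | succ n ih =>
      rw [pow_succ, pow_succ, ih]
      rw [Matrix.mul_assoc, Matrix.mul_assoc, ← Matrix.mul_assoc (star U),
        ← Matrix.mul_assoc (star U), hUU, Matrix.one_mul, ← Matrix.mul_assoc,
        ← Matrix.mul_assoc, Matrix.mul_assoc U]
  rw [hpow, Matrix.trace_mul_cycle, hUU, Matrix.one_mul,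
    Matrix.diagonal_pow, Matrix.trace_diagonal]
  simp [RCLike.ofReal]

lemma scalar_ineq (a b c : ℝ) (h : a + b + c = 0) :
    |a ^ 3 + b ^ 3 + c ^ 3| ≤
      (1 / Real.sqrt 6) * (a ^ 2 + b ^ 2 + c ^ 2) ^ ((3 : ℝ) / 2) := by
  set t : ℝ := a ^ 2 + b ^ 2 + c ^ 2 with ht
  have htnn : 0 ≤ t := by positivity
  have hrpow : t ^ ((3 : ℝ) / 2) = Real.sqrt (t ^ 3) := by
    rw [Real.sqrt_eq_rpow, ← Real.rpow_natCast t 3, ← Real.rpow_mul htnn]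
    norm_num
  have hkey : (a ^ 3 + b ^ 3 + c ^ 3) ^ 2 * 6 ≤ t ^ 3 := by
    have hc : c = -a - b := by linarith
    subst hc
    simp only [ht]
    nlinarith [sq_nonneg ((a - b) * (2 * a + b) * (a + 2 * b))]
  have h6 : (0:ℝ) < Real.sqrt 6 := Real.sqrt_pos.mpr (by norm_num)
  rw [hrpow]
  rw [div_mul_eq_mul_div, one_mul, le_div_iff₀ h6]
  have : |a ^ 3 + b ^ 3 + c ^ 3| * Real.sqrt 6
      = Real.sqrt ((a ^ 3 + b ^ 3 + c ^ 3) ^ 2 * 6) := by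
    rw [Real.sqrt_mul (sq_nonneg _), Real.sqrt_sq_eq_abs]
  rw [this]
  exact Real.sqrt_le_sqrt hkey

/-- For every real symmetric traceless 3×3 matrix `S`,
`|tr(S³)| ≤ (1/√6) · (tr(S²))^{3/2}`. -/
theorem trace_cube_le (S : Matrix (Fin 3) (Fin 3) ℝ)
    (hS : S.IsSymm) (htr : S.trace = 0) :
    |(S ^ 3).trace| ≤ (1 / Real.sqrt 6) * ((S ^ 2).trace) ^ ((3 : ℝ) / 2) := by
  have hH : S.IsHermitian := hS
  have h1 : ∑ i, hH.eigenvalues i ^ 1 = 0 := by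
    rw [← trace_pow_eq S hH 1, pow_one, htr]
  have h2 := trace_pow_eq S hH 2
  have h3 := trace_pow_eq S hH 3
  rw [h2, h3]
  have := scalar_ineq (hH.eigenvalues 0) (hH.eigenvalues 1) (hH.eigenvalues 2) (by
    simpa [Fin.sum_univ_three] using h1)
  simpa [Fin.sum_univ_three] using this
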